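/- The cdf of U = Y₁ + aY₂, where Y₁, Y₂ are independent chi-square variables with 1 degree of freedom and a > 1, is concave on (0, ∞). -/

import Mathlib

open MeasureTheory Real Set

/-- Chi-square density with 1 degree of freedom. -/
noncomputable def gOne (u : ℝ) : ℝ :=
  u ^ (-(1:ℝ) / 2) * Real.exp (-u / 2) / Real.sqrt (2 * Real.pi)

lemma gOne_of_nonpos {t : ℝ} (ht : t ≤ 0) : gOne t = 0 := by
  unfold gOne
  rcases lt_or_eq_of_le ht with h | h
  · rw [Real.rpow_def_of_neg h]
    have : Real.cos (-(1:ℝ)/2 * Real.pi) = 0 := by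
      rw [show (-(1:ℝ)/2 * Real.pi) = -(Real.pi/2) by ring, Real.cos_neg, Real.cos_pi_div_two]
    rw [this]; ring
  · rw [h]
    rw [Real.zero_rpow (by norm_num : (-(1:ℝ)/2) ≠ 0)]
    ring

lemma gOne_nonneg (t : ℝ) : 0 ≤ gOne t := by
  rcases le_or_gt t 0 with h | h
  · rw [gOne_of_nonpos h]
  · unfold gOne
    positivity

lemma measurable_gOne : Measurable gOne := by
  unfold gOne; fun_prop

lemma integrable_gOne : Integrable gOne := by
  have h1 : IntegrableOn gOne (Ioc 0 1) := by
    have hb : IntegrableOn (fun t : ℝ => t ^ (-(1:ℝ)/2)) (Ioc 0 1) := by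
      rw [← intervalIntegrable_iff_integrableOn_Ioc_of_le zero_le_one]
      exact intervalIntegral.intervalIntegrable_rpow' (by norm_num)
    refine hb.integrable.mono (measurable_gOne.aestronglyMeasurable.restrict) ?_
    filter_upwards [self_mem_ae_restrict measurableSet_Ioc] with t ht
    have ht0 : (0:ℝ) < t := ht.1
    have h2 : ‖gOne t‖ = gOne t := Real.norm_of_nonneg (gOne_nonneg t)
    rw [h2]
    have hsq : (1:ℝ) ≤ Real.sqrt (2 * Real.pi) := by
      rw [show (1:ℝ) = Real.sqrt 1 by simp]
      exact Real.sqrt_le_sqrt (by nlinarith [Real.pi_gt_three])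
    have : gOne t ≤ t ^ (-(1:ℝ)/2) := by
      unfold gOne
      rw [div_le_iff₀ (by positivity)]
      have h3 : Real.exp (-t/2) ≤ 1 := by
        rw [Real.exp_le_one_iff]; linarith
      nlinarith [Real.rpow_pos_of_pos ht0 (-(1:ℝ)/2), Real.exp_pos (-t/2)]
    calc gOne t ≤ t ^ (-(1:ℝ)/2) := this
    _ ≤ ‖t ^ (-(1:ℝ)/2)‖ := le_abs_self _
  have h2 : IntegrableOn gOne (Ioi 1) := by
    have hb : IntegrableOn (fun t : ℝ => Real.exp (-(1/2) * t)) (Ioi 1) :=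
      exp_neg_integrableOn_Ioi 1 (by norm_num)
    refine hb.integrable.mono (measurable_gOne.aestronglyMeasurable.restrict) ?_
    filter_upwards [self_mem_ae_restrict measurableSet_Ioi] with t ht
    have ht1 : (1:ℝ) < t := ht
    rw [Real.norm_of_nonneg (gOne_nonneg t)]
    have hsq : (1:ℝ) ≤ Real.sqrt (2 * Real.pi) := by
      rw [show (1:ℝ) = Real.sqrt 1 by simp]
      exact Real.sqrt_le_sqrt (by nlinarith [Real.pi_gt_three])
    have hr : t ^ (-(1:ℝ)/2) ≤ 1 := by
      rw [show (1:ℝ) = (1:ℝ) ^ (-(1:ℝ)/2) by simp]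
      exact Real.rpow_le_rpow_of_nonpos one_pos (le_of_lt ht1) (by norm_num) |>.trans
        (by simp)
    have : gOne t ≤ Real.exp (-(1/2) * t) := by
      unfold gOne
      rw [div_le_iff₀ (by positivity)]
      have : Real.exp (-t/2) = Real.exp (-(1/2)*t) := by ring_nf
      rw [this]
      nlinarith [Real.exp_pos (-(1/2)*t), Real.rpow_pos_of_pos (lt_trans one_pos ht1) (-(1:ℝ)/2)]
    calc gOne t ≤ Real.exp (-(1/2)*t) := this
    _ ≤ ‖Real.exp (-(1/2)*t)‖ := le_abs_self _
  have h3 : IntegrableOn gOne (Ioi 0) := by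
    rw [← Ioc_union_Ioi_eq_Ioi (zero_le_one (α := ℝ)), integrableOn_union]
    exact ⟨h1, h2⟩
  have h4 : gOne = Set.indicator (Ioi 0) gOne := by
    funext t
    rcases le_or_gt t 0 with h | h
    · rw [gOne_of_nonpos h, Set.indicator_of_notMem (by simpa using h)]
    · rw [Set.indicator_of_mem (by simpa using h)]
  rw [h4, integrable_indicator_iff measurableSet_Ioi]
  exact h3

noncomputable def hDen (a t : ℝ) : ℝ := ∫ y : ℝ, gOne (t - a * y) * gOne y

lemma cdf_rep (a : ℝ) (ha : 0 < a) (u : ℝ) :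
    IntegrableOn (hDen a) (Iic u) ∧
    (∫ y in {y : ℝ × ℝ | 0 < y.1 ∧ 0 < y.2 ∧ y.1 + a * y.2 ≤ u}, gOne y.1 * gOne y.2)
      = ∫ t in Iic u, hDen a t := by
  set F : ℝ × ℝ → ℝ := fun z => gOne z.1 * gOne z.2 with hFdef
  set T : Set (ℝ × ℝ) := {z | z.1 + a * z.2 ≤ u} with hTdef
  set K : ℝ × ℝ → ℝ :=
    fun z => Set.indicator {p : ℝ × ℝ | p.1 ≤ u}
      (fun p => gOne (p.1 - a * p.2) * gOne p.2) z with hKdef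
  have hTmeas : MeasurableSet T :=
    measurableSet_le (measurable_fst.add (measurable_const.mul measurable_snd)) measurable_const
  have hFint : Integrable F (volume.prod volume) := integrable_gOne.mul_prod integrable_gOne
  have hKmeas : Measurable K := by
    apply Measurable.indicator
    · exact (measurable_gOne.comp
        (measurable_fst.sub (measurable_const.mul measurable_snd))).mul
        (measurable_gOne.comp measurable_snd)
    · exact measurableSet_le measurable_fst measurable_const
  have hKslice : ∀ y2 : ℝ, (fun t => K (t, y2))
      = Set.indicator (Iic u) (fun t => gOne (t - a * y2) * gOne y2) := by
    intro y2; funext t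
    simp [hKdef, Set.indicator_apply]
  have hslice_int : ∀ y2 : ℝ, Integrable (fun t => K (t, y2)) := by
    intro y2
    rw [hKslice y2]
    exact ((integrable_gOne.comp_sub_right (a * y2)).mul_const _).indicator measurableSet_Iic
  -- value of ∫ gOne
  set C : ℝ := ∫ x : ℝ, gOne x with hCdef
  have htrans : ∀ c : ℝ, (∫ t in Iic u, gOne (t - c)) = ∫ x in Iic (u - c), gOne x := by
    intro c
    rw [← integral_indicator measurableSet_Iic, ← integral_indicator measurableSet_Iic]
    have : (fun t => Set.indicator (Iic u) (fun s => gOne (s - c)) t)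
        = fun t => Set.indicator (Iic (u - c)) gOne (t - c) := by
      funext t
      by_cases h : t ≤ u
      · rw [Set.indicator_of_mem (by simpa using h),
          Set.indicator_of_mem (by simp [Set.mem_Iic]; linarith)]
      · rw [Set.indicator_of_notMem (by simpa using h),
          Set.indicator_of_notMem (by simp [Set.mem_Iic]; linarith)]
    rw [this, integral_sub_right_eq_self (Set.indicator (Iic (u - c)) gOne) c]
  have hinner_norm : ∀ y2 : ℝ, (∫ t, ‖K (t, y2)‖) ≤ C * gOne y2 := by
    intro y2
    have h1 : (fun t => ‖K (t, y2)‖) = fun t => K (t, y2) := by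
      funext t
      refine Real.norm_of_nonneg ?_
      rw [congrFun (hKslice y2) t]
      exact Set.indicator_nonneg (fun s _ => mul_nonneg (gOne_nonneg _) (gOne_nonneg _)) t
    rw [h1]
    have h2 : (∫ t, K (t, y2)) ≤ ∫ t, gOne (t - a * y2) * gOne y2 := by
      refine integral_mono (hslice_int y2)
        ((integrable_gOne.comp_sub_right (a * y2)).mul_const _) ?_
      intro t
      show K (t, y2) ≤ _
      rw [congrFun (hKslice y2) t]
      exact Set.indicator_le_self' (fun s _ => mul_nonneg (gOne_nonneg _) (gOne_nonneg _)) t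
    have h3 : (∫ t, gOne (t - a * y2) * gOne y2) = C * gOne y2 := by
      rw [integral_mul_const, integral_sub_right_eq_self gOne (a * y2)]
    linarith
  have hKint : Integrable K (volume.prod volume) := by
    refine (integrable_prod_iff' hKmeas.aestronglyMeasurable).2 ⟨ae_of_all _ hslice_int, ?_⟩
    refine Integrable.mono' (integrable_gOne.const_mul C) ?_ ?_
    · exact (hKmeas.norm.stronglyMeasurable.integral_prod_left').aestronglyMeasurable
    · refine ae_of_all _ fun y2 => ?_
      rw [Real.norm_of_nonneg (integral_nonneg fun t => norm_nonneg _)]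
      exact hinner_norm y2
  -- common value
  have hval2 : (∫ z, K z ∂(volume.prod volume))
      = ∫ y2 : ℝ, (∫ x in Iic (u - a * y2), gOne x) * gOne y2 := by
    rw [integral_prod_symm K hKint]
    congr 1
    funext y2
    calc (∫ t, K (t, y2))
        = ∫ t, Set.indicator (Iic u) (fun s => gOne (s - a * y2) * gOne y2) t := by
          rw [hKslice y2]
      _ = ∫ t in Iic u, gOne (t - a * y2) * gOne y2 := integral_indicator measurableSet_Iic
      _ = (∫ t in Iic u, gOne (t - a * y2)) * gOne y2 := integral_mul_const _ _
      _ = (∫ x in Iic (u - a * y2), gOne x) * gOne y2 := by rw [htrans]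
  have hval3 : (∫ z, Set.indicator T F z ∂(volume.prod volume))
      = ∫ y2 : ℝ, (∫ x in Iic (u - a * y2), gOne x) * gOne y2 := by
    rw [integral_prod_symm _ (hFint.indicator hTmeas)]
    congr 1
    funext y2
    have hsl : (fun y1 => Set.indicator T F (y1, y2))
        = Set.indicator (Iic (u - a * y2)) (fun y1 => gOne y1 * gOne y2) := by
      funext y1
      by_cases h : y1 + a * y2 ≤ u
      · rw [Set.indicator_of_mem (by simpa [hTdef] using h),
          Set.indicator_of_mem (by simp [Set.mem_Iic]; linarith)]
      · rw [Set.indicator_of_notMem (by simpa [hTdef] using h),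
          Set.indicator_of_notMem (by simp [Set.mem_Iic]; linarith)]
    calc (∫ y1, Set.indicator T F (y1, y2))
        = ∫ y1, Set.indicator (Iic (u - a * y2)) (fun y1 => gOne y1 * gOne y2) y1 := by
          rw [hsl]
      _ = ∫ y1 in Iic (u - a * y2), gOne y1 * gOne y2 := integral_indicator measurableSet_Iic
      _ = (∫ x in Iic (u - a * y2), gOne x) * gOne y2 := integral_mul_const _ _
  have hKinner : (fun t => ∫ y2, K (t, y2)) = Set.indicator (Iic u) (hDen a) := by
    funext t
    by_cases h : t ≤ u
    · rw [Set.indicator_of_mem (by simpa using h)]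
      unfold hDen
      congr 1
      funext y2
      rw [hKdef]
      simp only
      rw [Set.indicator_of_mem (by simpa using h)]
    · rw [Set.indicator_of_notMem (by simpa using h)]
      have : (fun y2 => K (t, y2)) = fun _ => (0:ℝ) := by
        funext y2
        rw [hKdef]
        simp only
        rw [Set.indicator_of_notMem (by simpa using h)]
      rw [this, integral_zero]
  have hIntOn : IntegrableOn (hDen a) (Iic u) := by
    have := hKint.integral_prod_left
    rw [hKinner] at this
    rwa [integrable_indicator_iff measurableSet_Iic] at this
  have hval1 : (∫ z, K z ∂(volume.prod volume)) = ∫ t in Iic u, hDen a t := by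
    rw [integral_prod K hKint, hKinner, integral_indicator measurableSet_Iic]
  -- LHS
  have hS : (∫ y in {y : ℝ × ℝ | 0 < y.1 ∧ 0 < y.2 ∧ y.1 + a * y.2 ≤ u}, gOne y.1 * gOne y.2)
      = ∫ z in T, F z := by
    refine (setIntegral_eq_of_subset_of_forall_diff_eq_zero hTmeas ?_ ?_).symm
    · intro z hz
      exact hz.2.2
    · rintro z ⟨hzT, hzS⟩
      simp only [Set.mem_setOf_eq, not_and, not_le] at hzS
      rcases le_or_gt z.1 0 with h | h
      · simp [hFdef, gOne_of_nonpos h]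
      · rcases le_or_gt z.2 0 with h2 | h2
        · simp [hFdef, gOne_of_nonpos h2]
        · exact absurd (show z.1 + a * z.2 ≤ u from hzT) (not_le.mpr (hzS h h2))
  have hT : (∫ z in T, F z) = ∫ z, Set.indicator T F z ∂(volume.prod volume) := by
    rw [← MeasureTheory.Measure.volume_eq_prod, integral_indicator hTmeas]
  refine ⟨hIntOn, ?_⟩
  rw [hS, hT, hval3, ← hval2, hval1]

noncomputable def kFun (a s : ℝ) : ℝ :=
  s ^ (-(1:ℝ)/2) * (1 - s) ^ (-(1:ℝ)/2) / (2 * Real.pi * Real.sqrt a)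

noncomputable def phiFun (a s : ℝ) : ℝ := (s / a + (1 - s)) / 2

noncomputable def jDen (a t : ℝ) : ℝ :=
  ∫ s in Ioo (0:ℝ) 1, kFun a s * Real.exp (-(t * phiFun a s))

lemma measurable_kFun (a : ℝ) : Measurable (kFun a) := by
  unfold kFun; fun_prop

lemma kFun_nonneg {a : ℝ} (ha : 0 < a) {s : ℝ} (hs : s ∈ Ioo (0:ℝ) 1) : 0 ≤ kFun a s := by
  unfold kFun
  have h1 : (0:ℝ) < s := hs.1
  have h2 : (0:ℝ) < 1 - s := by have := hs.2; linarith
  positivity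

lemma integrable_kFun {a : ℝ} (ha : 0 < a) : IntegrableOn (kFun a) (Ioo (0:ℝ) 1) := by
  have hrpow : IntervalIntegrable (fun x : ℝ => x ^ (-(1:ℝ)/2)) volume 0 (1/2) :=
    intervalIntegral.intervalIntegrable_rpow' (by norm_num)
  have h1 : IntegrableOn (fun x : ℝ => x ^ (-(1:ℝ)/2)) (Ioc (0:ℝ) (1/2)) := by
    rw [← intervalIntegrable_iff_integrableOn_Ioc_of_le (by norm_num)]
    exact hrpow
  have h2 : IntegrableOn (fun x : ℝ => (1 - x) ^ (-(1:ℝ)/2)) (Ioo (1/2:ℝ) 1) := by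
    have := hrpow.comp_sub_left 1
    rw [show (1:ℝ) - 0 = 1 by norm_num, show (1:ℝ) - 1/2 = 1/2 by norm_num] at this
    have h3 : IntegrableOn (fun x : ℝ => (1 - x) ^ (-(1:ℝ)/2)) (Ioc (1/2:ℝ) 1) := by
      rw [← intervalIntegrable_iff_integrableOn_Ioc_of_le (by norm_num)]
      exact this.symm
    exact h3.mono_set Ioo_subset_Ioc_self
  have hmeas : AEStronglyMeasurable (kFun a) (volume : Measure ℝ) := (measurable_kFun a).aestronglyMeasurable
  have half : IntegrableOn (kFun a) (Ioc (0:ℝ) (1/2)) := by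
    refine Integrable.mono (h1.const_mul (Real.sqrt 2 / (2 * Real.pi * Real.sqrt a)))
      hmeas.restrict ?_
    filter_upwards [self_mem_ae_restrict measurableSet_Ioc] with s hs
    have hs0 : (0:ℝ) < s := hs.1
    have hs1 : s ≤ 1/2 := hs.2
    have hb : (1:ℝ)/2 ≤ 1 - s := by linarith
    have hub : (1 - s) ^ (-(1:ℝ)/2) ≤ Real.sqrt 2 := by
      have := Real.rpow_le_rpow_of_nonpos (by norm_num : (0:ℝ) < 1/2) hb
        (by norm_num : (-(1:ℝ)/2) ≤ 0)
      calc (1 - s) ^ (-(1:ℝ)/2) ≤ ((1:ℝ)/2) ^ (-(1:ℝ)/2) := this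
        _ = Real.sqrt 2 := by
          rw [show (-(1:ℝ)/2) = -(1/2) by ring, Real.rpow_neg (by norm_num),
            ← Real.sqrt_eq_rpow, show ((1:ℝ)/2) = 2⁻¹ by norm_num, Real.sqrt_inv, inv_inv]
    rw [Real.norm_of_nonneg (kFun_nonneg ha ⟨hs0, by linarith⟩), Real.norm_of_nonneg
      (mul_nonneg (by positivity) (Real.rpow_nonneg hs0.le _))]
    unfold kFun
    rw [div_mul_eq_mul_div]
    have hd : (0:ℝ) < 2 * Real.pi * Real.sqrt a := by positivity
    rw [div_le_div_iff₀ hd hd]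
    have h4 : (0:ℝ) < s ^ (-(1:ℝ)/2) := Real.rpow_pos_of_pos hs0 _
    nlinarith [mul_le_mul_of_nonneg_right (mul_le_mul_of_nonneg_left hub h4.le) hd.le]
  have half2 : IntegrableOn (kFun a) (Ioo (1/2:ℝ) 1) := by
    refine Integrable.mono (h2.const_mul (Real.sqrt 2 / (2 * Real.pi * Real.sqrt a)))
      hmeas.restrict ?_
    filter_upwards [self_mem_ae_restrict measurableSet_Ioo] with s hs
    have hs0 : (1:ℝ)/2 < s := hs.1
    have hs1 : s < 1 := hs.2
    have hub : s ^ (-(1:ℝ)/2) ≤ Real.sqrt 2 := by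
      have := Real.rpow_le_rpow_of_nonpos (by norm_num : (0:ℝ) < 1/2) hs0.le
        (by norm_num : (-(1:ℝ)/2) ≤ 0)
      calc s ^ (-(1:ℝ)/2) ≤ ((1:ℝ)/2) ^ (-(1:ℝ)/2) := this
        _ = Real.sqrt 2 := by
          rw [show (-(1:ℝ)/2) = -(1/2) by ring, Real.rpow_neg (by norm_num),
            ← Real.sqrt_eq_rpow, show ((1:ℝ)/2) = 2⁻¹ by norm_num, Real.sqrt_inv, inv_inv]
    rw [Real.norm_of_nonneg (kFun_nonneg ha ⟨by linarith, hs1⟩), Real.norm_of_nonneg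
      (mul_nonneg (by positivity) (Real.rpow_nonneg (by linarith) _))]
    unfold kFun
    rw [div_mul_eq_mul_div]
    have hd : (0:ℝ) < 2 * Real.pi * Real.sqrt a := by positivity
    rw [div_le_div_iff₀ hd hd]
    have h4 : (0:ℝ) < (1 - s) ^ (-(1:ℝ)/2) := Real.rpow_pos_of_pos (by linarith) _
    nlinarith [mul_le_mul_of_nonneg_right (mul_le_mul_of_nonneg_left hub h4.le) hd.le]
  have : Ioc (0:ℝ) (1/2) ∪ Ioo (1/2:ℝ) 1 = Ioo (0:ℝ) 1 :=
    Set.Ioc_union_Ioo_eq_Ioo (by norm_num) (by norm_num)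
  rw [← this, integrableOn_union]
  exact ⟨half, half2⟩

lemma phiFun_nonneg {a : ℝ} (ha : 0 < a) {s : ℝ} (hs : s ∈ Ioo (0:ℝ) 1) : 0 ≤ phiFun a s := by
  unfold phiFun
  have h1 := hs.1
  have h2 := hs.2
  have : (0:ℝ) ≤ s / a := by positivity
  have : (0:ℝ) ≤ 1 - s := by linarith
  positivity

lemma integrable_jDen_integrand {a : ℝ} (ha : 0 < a) {t : ℝ} (ht : 0 ≤ t) :
    IntegrableOn (fun s => kFun a s * Real.exp (-(t * phiFun a s))) (Ioo (0:ℝ) 1) := by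
  refine Integrable.mono (integrable_kFun ha) ?_ ?_
  · apply AEStronglyMeasurable.mul ((measurable_kFun a).aestronglyMeasurable.restrict)
    apply Measurable.aestronglyMeasurable
    unfold phiFun; fun_prop
  · filter_upwards [self_mem_ae_restrict measurableSet_Ioo] with s hs
    rw [Real.norm_of_nonneg (mul_nonneg (kFun_nonneg ha hs) (Real.exp_nonneg _)),
      Real.norm_of_nonneg (kFun_nonneg ha hs)]
    have hexp : Real.exp (-(t * phiFun a s)) ≤ 1 := by
      rw [Real.exp_le_one_iff, neg_nonpos]
      exact mul_nonneg ht (phiFun_nonneg ha hs)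
    nlinarith [kFun_nonneg ha hs]

lemma jDen_antitone {a : ℝ} (ha : 0 < a) {t1 t2 : ℝ} (h1 : 0 ≤ t1) (h12 : t1 ≤ t2) :
    jDen a t2 ≤ jDen a t1 := by
  unfold jDen
  refine setIntegral_mono_on (integrable_jDen_integrand ha (le_trans h1 h12))
    (integrable_jDen_integrand ha h1) measurableSet_Ioo ?_
  intro s hs
  have hphi := phiFun_nonneg ha hs
  have : Real.exp (-(t2 * phiFun a s)) ≤ Real.exp (-(t1 * phiFun a s)) := by
    apply Real.exp_le_exp.2
    have := mul_le_mul_of_nonneg_right h12 hphi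
    linarith
  nlinarith [kFun_nonneg ha hs, Real.exp_nonneg (-(t2 * phiFun a s))]

lemma hDen_eq_jDen {a t : ℝ} (ha : 0 < a) (ht : 0 < t) : hDen a t = jDen a t := by
  have ha' : a ≠ 0 := ha.ne'
  have ht' : t ≠ 0 := ht.ne'
  set Q : ℝ → ℝ := fun y => gOne (t - a * y) * gOne y with hQ
  have key := MeasureTheory.Measure.integral_comp_mul_left Q (t / a)
  -- key : ∫ x, Q (t/a * x) = |(t/a)⁻¹| • ∫ y, Q y
  have habs : |(t/a)⁻¹| = a / t := by
    rw [abs_of_pos (by positivity)]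
    field_simp
  rw [habs] at key
  have hq : hDen a t = (t / a) * ∫ x : ℝ, Q (t / a * x) := by
    rw [key, smul_eq_mul]
    unfold hDen
    rw [← hQ]
    field_simp
  rw [hq, ← MeasureTheory.integral_const_mul]
  have hptwise : (fun s => (t / a) * Q (t / a * s))
      = Set.indicator (Ioo (0:ℝ) 1) (fun s => kFun a s * Real.exp (-(t * phiFun a s))) := by
    funext s
    rcases le_or_gt s 0 with hs0 | hs0
    · rw [Set.indicator_of_notMem (by simp [Set.mem_Ioo]; intro h; linarith)]
      have : gOne (t / a * s) = 0 := gOne_of_nonpos (by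
        have : t / a * s ≤ 0 := mul_nonpos_of_nonneg_of_nonpos (by positivity) hs0
        linarith)
      simp [hQ, this]
    rcases le_or_gt 1 s with hs1 | hs1
    · rw [Set.indicator_of_notMem (by simp [Set.mem_Ioo]; intro h; linarith)]
      have harg : t - a * (t / a * s) = t * (1 - s) := by field_simp
      have : gOne (t - a * (t / a * s)) = 0 := by
        rw [harg]
        exact gOne_of_nonpos (by nlinarith)
      simp [hQ, this]
    · rw [Set.indicator_of_mem (Set.mem_Ioo.mpr ⟨hs0, hs1⟩)]
      have h1s : (0:ℝ) < 1 - s := by linarith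
      have harg : t - a * (t / a * s) = t * (1 - s) := by field_simp
      have harg2 : t / a * s = t * (s * a⁻¹) := by ring
      show (t / a) * (gOne (t - a * (t / a * s)) * gOne (t / a * s)) = _
      rw [harg, harg2]
      unfold gOne
      have e1 : (t * (1 - s)) ^ (-(1:ℝ)/2) = t ^ (-(1:ℝ)/2) * (1 - s) ^ (-(1:ℝ)/2) :=
        Real.mul_rpow ht.le h1s.le
      have einv : (a⁻¹ : ℝ) ^ (-(1:ℝ)/2) = Real.sqrt a := by
        rw [Real.inv_rpow ha.le, show (-(1:ℝ)/2) = -(1/2) by ring, Real.rpow_neg ha.le,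
          inv_inv, ← Real.sqrt_eq_rpow]
      have e2 : (t * (s * a⁻¹)) ^ (-(1:ℝ)/2)
          = t ^ (-(1:ℝ)/2) * (s ^ (-(1:ℝ)/2) * Real.sqrt a) := by
        rw [Real.mul_rpow ht.le (by positivity), Real.mul_rpow hs0.le (by positivity), einv]
      have e3 : t ^ (-(1:ℝ)/2) * t ^ (-(1:ℝ)/2) = t⁻¹ := by
        rw [← Real.rpow_add ht]
        norm_num [Real.rpow_neg_one]
      have e4 : Real.sqrt (2 * Real.pi) * Real.sqrt (2 * Real.pi) = 2 * Real.pi :=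
        Real.mul_self_sqrt (by positivity)
      have e5 : Real.exp (-(t * (1 - s)) / 2) * Real.exp (-(t * (s * a⁻¹)) / 2)
          = Real.exp (-(t * phiFun a s)) := by
        rw [← Real.exp_add]
        congr 1
        unfold phiFun
        field_simp
        ring
      rw [e1, e2]
      unfold kFun
      have hsa : Real.sqrt a * Real.sqrt a = a := Real.mul_self_sqrt ha.le
      have expand : t / a * (t ^ (-(1:ℝ)/2) * (1 - s) ^ (-(1:ℝ)/2)
            * Real.exp (-(t * (1 - s)) / 2) / Real.sqrt (2 * Real.pi)
          * (t ^ (-(1:ℝ)/2) * (s ^ (-(1:ℝ)/2) * Real.sqrt a)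
            * Real.exp (-(t * (s * a⁻¹)) / 2) / Real.sqrt (2 * Real.pi)))
          = (t / a) * (t ^ (-(1:ℝ)/2) * t ^ (-(1:ℝ)/2)) * Real.sqrt a
            * ((1 - s) ^ (-(1:ℝ)/2) * s ^ (-(1:ℝ)/2))
            * (Real.exp (-(t * (1 - s)) / 2) * Real.exp (-(t * (s * a⁻¹)) / 2))
            / (Real.sqrt (2 * Real.pi) * Real.sqrt (2 * Real.pi)) := by
        ring
      rw [expand, e3, e4, e5]
      have hsqa : (0:ℝ) < Real.sqrt a := Real.sqrt_pos.2 ha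
      field_simp
      linear_combination hsa
  rw [hptwise, integral_indicator measurableSet_Ioo]
  rfl

lemma concave_aux {H h : ℝ → ℝ} (hrep : ∀ u, H u = ∫ t in Iic u, h t)
    (hint : ∀ u, IntegrableOn h (Iic u))
    (hmono : ∀ t m : ℝ, 0 < t → t ≤ m → h m ≤ h t)
    {x y p q : ℝ} (hx : 0 < x) (hy : 0 < y) (hxy : x ≤ y) (hp : 0 ≤ p) (hq : 0 ≤ q)
    (hpq : p + q = 1) :
    p * H x + q * H y ≤ H (p * x + q * y) := by
  set m := p * x + q * y with hm
  have hxm : x ≤ m := by nlinarith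
  have hmy : m ≤ y := by nlinarith
  have hm0 : 0 < m := lt_of_lt_of_le hx hxm
  have hdisj : ∀ c d : ℝ, Disjoint (Iic c) (Ioc c d) := by
    intro c d
    rw [Set.disjoint_left]
    rintro t ht ht2
    exact absurd ht2.1 (not_lt.2 ht)
  have hsplit : ∀ c d : ℝ, c ≤ d → H d = H c + ∫ t in Ioc c d, h t := by
    intro c d hcd
    rw [hrep, hrep, ← setIntegral_union (hdisj c d) measurableSet_Ioc (hint c)
      ((hint d).mono_set (fun t ht => ht.2)), Set.Iic_union_Ioc_eq_Iic hcd]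
  have hvol : ∀ c d : ℝ, c ≤ d → (∫ _ in Ioc c d, h d) = (d - c) * h d := by
    intro c d hcd
    rw [setIntegral_const, measureReal_def, Real.volume_Ioc, ENNReal.toReal_ofReal (by linarith), smul_eq_mul]
  have hlb : (m - x) * h m ≤ ∫ t in Ioc x m, h t := by
    rw [← hvol x m hxm]
    refine setIntegral_mono_on (integrableOn_const measure_Ioc_lt_top.ne)
      ((hint m).mono_set (fun t ht => ht.2)) measurableSet_Ioc ?_
    intro t ht
    exact hmono t m (lt_trans hx ht.1) ht.2
  have hub : (∫ t in Ioc m y, h t) ≤ (y - m) * h m := by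
    have : (∫ _ in Ioc m y, h m) = (y - m) * h m := by
      rw [setIntegral_const, measureReal_def, Real.volume_Ioc, ENNReal.toReal_ofReal (by linarith), smul_eq_mul]
    rw [← this]
    refine setIntegral_mono_on ((hint y).mono_set (fun t ht => ht.2))
      (integrableOn_const measure_Ioc_lt_top.ne) measurableSet_Ioc ?_
    intro t ht
    exact hmono m t hm0 ht.1.le
  have e1 := hsplit x m hxm
  have e2 := hsplit m y hmy
  have h1 : y - m = p * (y - x) := by
    rw [hm]; linear_combination (-y) * hpq
  have h2 : m - x = q * (y - x) := by
    rw [hm]; linear_combination x * hpq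
  have A : q * (∫ t in Ioc m y, h t) ≤ q * ((y - m) * h m) :=
    mul_le_mul_of_nonneg_left hub hq
  have B : p * ((m - x) * h m) ≤ p * (∫ t in Ioc x m, h t) :=
    mul_le_mul_of_nonneg_left hlb hp
  rw [h1] at A
  rw [h2] at B
  have e1' : p * H x = p * H m - p * ∫ t in Ioc x m, h t := by rw [e1]; ring
  have e2' : q * H y = q * H m + q * ∫ t in Ioc m y, h t := by rw [e2]; ring
  have hsum : p * H m + q * H m = H m := by linear_combination (H m) * hpq
  linarith [A, B, e1', e2', hsum]

lemma hDen_mono {a : ℝ} (ha : 0 < a) {t m : ℝ} (ht : 0 < t) (htm : t ≤ m) :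
    hDen a m ≤ hDen a t := by
  rw [hDen_eq_jDen ha ht, hDen_eq_jDen ha (lt_of_lt_of_le ht htm)]
  exact jDen_antitone ha ht.le htm


/-- The cdf of U = Y₁ + aY₂, Y₁, Y₂ independent chi-square with 1 df and a > 1,
is concave on (0, ∞). -/
theorem stmt12 (a : ℝ) (ha : 1 < a) :
    ConcaveOn ℝ (Set.Ioi 0)
      (fun u => ∫ y in {y : ℝ × ℝ | 0 < y.1 ∧ 0 < y.2 ∧ y.1 + a * y.2 ≤ u},
        gOne y.1 * gOne y.2) := by
  have ha0 : 0 < a := by linarith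
  have hrep : ∀ u : ℝ,
      (∫ y in {y : ℝ × ℝ | 0 < y.1 ∧ 0 < y.2 ∧ y.1 + a * y.2 ≤ u}, gOne y.1 * gOne y.2)
        = ∫ t in Iic u, hDen a t := fun u => (cdf_rep a ha0 u).2
  have hint : ∀ u : ℝ, IntegrableOn (hDen a) (Iic u) := fun u => (cdf_rep a ha0 u).1
  have hmono : ∀ t m : ℝ, 0 < t → t ≤ m → hDen a m ≤ hDen a t :=
    fun t m ht htm => hDen_mono ha0 ht htm
  refine ⟨convex_Ioi 0, ?_⟩
  intro x hx y hy p q hp hq hpq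
  simp only [smul_eq_mul]
  rcases le_total x y with h | h
  · exact concave_aux hrep hint hmono hx hy h hp hq hpq
  · have key := concave_aux hrep hint hmono hy hx h hq hp (by linarith)
    have e : q * y + p * x = p * x + q * y := by ring
    rw [e] at key
    linarith
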